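/- arXiv:2504.00700 — 4 statements merged into one kernel-verified Lean document; each statement's English description precedes it below -/
import Mathlib

section
/- liminf_{A→∞} #𝕃^loc(A) / #𝕃(A) > 0. -/
/-! The tuples `(a, b, c, -d)` with `a, b, c, d ≤ A/2` positive, `gcd(a, b) = gcd(c, d) = 1`
and `a + b + c + d` even are locally solvable: modulo an odd prime `p` one of `a, b` and one
of `c, d` is a unit, and a linear form with two invertible coefficients over a field with
more than two elements vanishes at some vector of units; modulo `2` the all-ones vector is a
solution. Since `∑ₚ p⁻² < 1/2`, at least half of the pairs in `[1, N]²` are coprime, so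
there are `≫ A⁴` such tuples, whereas `#𝕃(A) ≤ (2A + 1)⁴`. -/

open Filter MeasureTheory Finset Topology
open scoped ENNReal

noncomputable section

/-- Euclidean norm of an integer quadruple. -/
def znorm (a : Fin 4 → ℤ) : ℝ := Real.sqrt (∑ i, ((a i : ℝ)) ^ 2)

/-- Euclidean norm of a natural-number quadruple. -/
def pnorm (x : Fin 4 → ℕ) : ℝ := Real.sqrt (∑ i, ((x i : ℝ)) ^ 2)

/-- Sup-norm `|a| = maxᵢ |aᵢ|` of an integer quadruple. -/
def snorm (a : Fin 4 → ℤ) : ℕ := Finset.univ.sup fun i => (a i).natAbs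

/-- Min of the absolute values of the coordinates. -/
def minAbs (a : Fin 4 → ℤ) : ℕ := Finset.univ.inf' Finset.univ_nonempty fun i => (a i).natAbs

/-- `a` is primitive: all coordinates nonzero and gcd of the coordinates is 1. -/
def IsPrimitive (a : Fin 4 → ℤ) : Prop := (∀ i, a i ≠ 0) ∧ Finset.univ.gcd a = 1

/-- `a` is locally solvable: it is primitive, its coordinates are not all of the same
sign, and for every prime `p` the congruence `⟨a,x⟩ ≡ 0 (mod p)` has a solution in the
reduced residues mod `p`. -/
def IsLocSolv (a : Fin 4 → ℤ) : Prop :=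
  IsPrimitive a ∧ ¬ ((∀ i, 0 < a i) ∨ (∀ i, a i < 0)) ∧
  ∀ p : ℕ, p.Prime → ∃ x : Fin 4 → (ZMod p)ˣ,
    ∑ i, (a i : ZMod p) * ((x i : (ZMod p)ˣ) : ZMod p) = 0

/-- The set `L(a)` of quadruples of primes solving `⟨a,p⟩ = 0`. -/
def Lsol (a : Fin 4 → ℤ) : Set (Fin 4 → ℕ) :=
  {p | (∀ i, (p i).Prime) ∧ ∑ i, a i * (p i : ℤ) = 0}

/-- `𝔪(a)`: the minimum of `|p|` over prime solutions `p ∈ L(a)`, and `∞` if there is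
no solution. -/
def mfrak (a : Fin 4 → ℤ) : ℝ≥0∞ :=
  ⨅ p ∈ Lsol a, ((Finset.univ.sup p : ℕ) : ℝ≥0∞)

/-- The condition `𝔪(a)³ ≤ |a|·(log |a|)⁴·(log log |a|)`. -/
def SmallSol (a : Fin 4 → ℤ) : Prop :=
  (mfrak a) ^ 3 ≤ ENNReal.ofReal ((snorm a : ℝ) * (Real.log (snorm a)) ^ 4 *
    Real.log (Real.log (snorm a)))

/-- `𝕃^loc(A)`. -/
def LlocSet (A : ℝ) : Set (Fin 4 → ℤ) := {a | IsLocSolv a ∧ znorm a ≤ A}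

/-- `𝕃(A)`. -/
def LSet (A : ℝ) : Set (Fin 4 → ℤ) := {a | IsPrimitive a ∧ znorm a ≤ A}

/-- `𝒫(B)`: quadruples of primes of sup-norm at most `B`. -/
def PP (B : ℝ) : Set (Fin 4 → ℕ) := {x | ∀ i, (x i).Prime ∧ (x i : ℝ) ≤ B}

/-- The counting function `N_a(B)`. -/
def NB (a : Fin 4 → ℤ) (B : ℝ) : ℝ :=
  (Real.log B) ^ 4 * (Set.ncard {x | x ∈ PP B ∧ ∑ i, a i * (x i : ℤ) = 0} : ℝ)

/-- `w = log log B / log log log B`. -/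
def wB (B : ℝ) : ℝ := Real.log (Real.log B) / Real.log (Real.log (Real.log B))

/-- `W = ∏_{p ≤ w} p^(⌈log w/log p⌉ + 1)`. -/
def WB (B : ℝ) : ℕ :=
  ∏ p ∈ Finset.filter Nat.Prime (Finset.range (⌊wB B⌋₊ + 1)),
    p ^ (⌈Real.log (wB B) / Real.log (p : ℝ)⌉₊ + 1)

/-- `rad(W) = ∏_{p ≤ w} p`. -/
def radWB (B : ℝ) : ℕ :=
  ∏ p ∈ Finset.filter Nat.Prime (Finset.range (⌊wB B⌋₊ + 1)), p

/-- The local counting function `N_a^loc(B)`; the summation condition is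
`a ∈ Λ_x^(W) ∩ 𝒞_x^(α)` with `α = log B`. -/
def NlocB (a : Fin 4 → ℤ) (B : ℝ) : ℝ :=
  (Real.log B) ^ 4 * (Real.log B * (WB B : ℝ) / znorm a) *
    ∑ᶠ x ∈ {x : Fin 4 → ℕ | x ∈ PP B ∧ ((WB B : ℤ) ∣ ∑ i, a i * (x i : ℤ)) ∧
      |∑ i, (x i : ℝ) * (a i : ℝ)| ≤ pnorm x * znorm a / (2 * Real.log B)},
      1 / pnorm x

/-- Gram determinant `‖u‖²‖v‖² − ⟨u,v⟩²` of a pair of real vectors. -/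
def gram2 (u v : Fin 4 → ℝ) : ℝ :=
  (∑ i, u i ^ 2) * (∑ i, v i ^ 2) - (∑ i, u i * v i) ^ 2

/-- Determinant of a rank-2 lattice `S ⊆ ℤ⁴`: for such a lattice it is the minimum of
`det(ℤu ⊕ ℤv) = √(‖u‖²‖v‖² − ⟨u,v⟩²)` over linearly independent pairs `u, v ∈ S`
(the minimum being attained precisely at bases of `S`). -/
def latDet2 (S : Set (Fin 4 → ℤ)) : ℝ :=
  sInf {d : ℝ | ∃ u ∈ S, ∃ v ∈ S,
    (∀ m n : ℤ, m • u + n • v = 0 → m = 0 ∧ n = 0) ∧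
    d = Real.sqrt (gram2 (fun i => (u i : ℝ)) (fun i => (v i : ℝ)))}

/-- `det(Λ_x ∩ Λ_y)` for quadruples of primes `x, y`. -/
def detXY (x y : Fin 4 → ℕ) : ℝ :=
  latDet2 {z | (∑ i, (x i : ℤ) * z i) = 0 ∧ (∑ i, (y i : ℤ) * z i) = 0}

/-- `Ω(B)`: pairs of distinct quadruples of primes of size at most `B`. -/
def OmegaB (B : ℝ) : Set ((Fin 4 → ℕ) × (Fin 4 → ℕ)) :=
  {p | p.1 ∈ PP B ∧ p.2 ∈ PP B ∧ p.1 ≠ p.2}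

/-- `E(B)`. -/
def EB (B : ℝ) : ℝ :=
  (Real.log B) ^ 8 * ∑ᶠ p ∈ OmegaB B, 1 / detXY p.1 p.2

/-- `𝒢(x,y)`: the gcd of the 2×2 minors of the matrix with columns `x, y`. -/
def Gcal (x y : Fin 4 → ℕ) : ℤ :=
  Finset.univ.gcd fun q : Fin 4 × Fin 4 =>
    (x q.1 : ℤ) * (y q.2 : ℤ) - (x q.2 : ℤ) * (y q.1 : ℤ)

/-- `Δ(x,y) = ‖x‖‖y‖/det(ℤx ⊕ ℤy)`. -/
def DeltaXY (x y : Fin 4 → ℕ) : ℝ :=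
  pnorm x * pnorm y / Real.sqrt (gram2 (fun i => (x i : ℝ)) (fun i => (y i : ℝ)))

/-- `ℰ_{x,y}(B) = min{1, Δ(x,y)²/α²} + 𝟏[𝒢(x,y) ∤ W/rad(W)]`. -/
def EcalXY (x y : Fin 4 → ℕ) (B : ℝ) : ℝ :=
  min 1 (DeltaXY x y ^ 2 / (Real.log B) ^ 2) +
  (if Gcal x y ∣ ((WB B / radWB B : ℕ) : ℤ) then 0 else 1)

/-- `F(B)`. -/
def FB (B : ℝ) : ℝ :=
  (Real.log B) ^ 8 * ∑ᶠ p ∈ OmegaB B, EcalXY p.1 p.2 B / detXY p.1 p.2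

/-- `ζ(2)`. -/
def zeta2 : ℝ := ∑' n : ℕ, (1 : ℝ) / (n + 1) ^ 2

/-- `{a ∈ ℤ⁴_prim : ‖a‖ ≤ A}` with `ℤ⁴_prim` the tuples of coprime coordinates. -/
def primA (A : ℝ) : Set (Fin 4 → ℤ) := {a | Finset.univ.gcd a = 1 ∧ znorm a ≤ A}

/-- `D(A,B)`. -/
def DAB (A B : ℝ) : ℝ :=
  (∑ᶠ a ∈ primA A, NB a B ^ 2) - (Real.log B) ^ 4 * ∑ᶠ a ∈ primA A, NB a B

/-- `Δ_a^mix(B)`. -/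
def DeltaMix (a : Fin 4 → ℤ) (B : ℝ) : ℝ :=
  (Real.log B) ^ 8 * (Real.log B * (WB B : ℝ) / znorm a) *
    ∑ᶠ x ∈ {x : Fin 4 → ℕ | x ∈ PP B ∧ ∑ i, a i * (x i : ℤ) = 0}, 1 / pnorm x

/-- `Δ_a^loc(B)`. -/
def DeltaLoc (a : Fin 4 → ℤ) (B : ℝ) : ℝ :=
  (Real.log B) ^ 8 * ((Real.log B) ^ 2 * (WB B : ℝ) ^ 2 / znorm a ^ 2) *
    ∑ᶠ x ∈ {x : Fin 4 → ℕ | x ∈ PP B ∧ ((WB B : ℤ) ∣ ∑ i, a i * (x i : ℤ)) ∧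
      |∑ i, (x i : ℝ) * (a i : ℝ)| ≤ pnorm x * znorm a / (2 * Real.log B)},
      1 / pnorm x ^ 2

/-- `D^mix(A,B)`. -/
def DmixAB (A B : ℝ) : ℝ :=
  (∑ᶠ a ∈ primA A, NB a B * NlocB a B) - ∑ᶠ a ∈ primA A, DeltaMix a B

/-- `D^loc(A,B)`. -/
def DlocAB (A B : ℝ) : ℝ :=
  (∑ᶠ a ∈ primA A, NlocB a B ^ 2) - ∑ᶠ a ∈ primA A, DeltaLoc a B

/-- `K(A,B)`. -/
def KAB (A B : ℝ) : ℝ :=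
  ∑ᶠ a ∈ primA A, ((Real.log B) ^ 4 * NB a B + DeltaMix a B + DeltaLoc a B)

/-- `τ(a,γ) = γ·vol({u ∈ 𝓑₄(1) ∩ ℝ⁴₊ : a ∈ 𝒞_u^(γ)})`. -/
def tauA (a : Fin 4 → ℤ) (γ : ℝ) : ℝ :=
  γ * (volume {u : Fin 4 → ℝ | Real.sqrt (∑ i, u i ^ 2) < 1 ∧ (∀ i, 0 < u i) ∧
      |∑ i, u i * (a i : ℝ)| ≤ Real.sqrt (∑ i, u i ^ 2) * znorm a / (2 * γ)}).toReal

/-- The singular integral `𝔍_a(B) = τ(a, log B)`. -/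
def Jfrak (a : Fin 4 → ℤ) (B : ℝ) : ℝ := tauA a (Real.log B)

/-- `σ(a,Q) = (Q/φ(Q)⁴)·#{b ∈ ((ℤ/Qℤ)^*)⁴ : ⟨a,b⟩ ≡ 0 mod Q}`. -/
def sigmaA (a : Fin 4 → ℤ) (Q : ℕ) : ℝ :=
  (Q : ℝ) / (Nat.totient Q : ℝ) ^ 4 *
    (Nat.card {b : Fin 4 → (ZMod Q)ˣ |
      ∑ i, (a i : ZMod Q) * ((b i : (ZMod Q)ˣ) : ZMod Q) = 0} : ℝ)

/-- The truncated singular series `𝔖_a(B) = σ(a, W)`. -/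
def Sfrak (a : Fin 4 → ℤ) (B : ℝ) : ℝ := sigmaA a (WB B)

end

theorem exists_units_mul_add_mul_eq {F : Type*} [Field F] [Fintype F]
    (hF : 2 < Fintype.card F) {u v : F} (hu : u ≠ 0) (hv : v ≠ 0) (t : F) :
    ∃ x y : Fˣ, u * x + v * y = t := by
  classical
  obtain ⟨y, hy⟩ : ∃ y : F, y ∉ ({0, t / v} : Finset F) := by
    by_contra! h
    have := card_le_card (s := univ) fun y _ => h y
    rw [card_univ] at this
    linarith [card_le_two (a := (0 : F)) (b := t / v)]
  simp only [mem_insert, mem_singleton, not_or] at hy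
  have hx : (t - v * y) / u ≠ 0 :=
    div_ne_zero (sub_ne_zero.mpr fun h => hy.2 (by rw [h]; field_simp)) hu
  exact ⟨Units.mk0 _ hx, Units.mk0 y hy.1, by simp only [Units.val_mk0]; field_simp; ring⟩

theorem exists_units_sum_mul_eq_zero {F ι : Type*} [Field F] [Fintype F] [Fintype ι]
    [DecidableEq ι] (hF : 2 < Fintype.card F) (c : ι → F) {i j : ι} (hij : i ≠ j)
    (hi : c i ≠ 0) (hj : c j ≠ 0) : ∃ x : ι → Fˣ, ∑ k, c k * x k = 0 := by
  obtain ⟨xi, xj, hxij⟩ := exists_units_mul_add_mul_eq hF hi hj (c i + c j - ∑ k, c k)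
  set x : ι → Fˣ := fun k => if k = i then xi else if k = j then xj else 1
  have hdiff : ∑ k, c k * (x k - 1) = c i * (xi - 1) + c j * (xj - 1) := by
    rw [Finset.sum_eq_add i j hij (fun k _ hk => by simp [x, hk.1, hk.2]) (by simp) (by simp)]
    simp [x, hij.symm]
  have : ∑ k, c k * x k = ∑ k, c k + ∑ k, c k * (x k - 1) := by
    rw [← sum_add_distrib]; exact sum_congr rfl fun k _ => by ring
  exact ⟨x, by rw [this, hdiff]; linear_combination hxij⟩

theorem exists_units_sum_intCast_mul_eq_zero_of_dvd {ι : Type*} [Fintype ι] {n : ℕ} (a : ι → ℤ)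
    (h : (n : ℤ) ∣ ∑ i, a i) : ∃ x : ι → (ZMod n)ˣ, ∑ i, (a i : ZMod n) * x i = 0 :=
  ⟨1, by simpa [← Int.cast_sum, ZMod.intCast_zmod_eq_zero_iff_dvd] using h⟩

theorem Finset.gcd_eq_one_of_isCoprime {ι α : Type*} [CommRing α] [IsDomain α]
    [NormalizedGCDMonoid α] {s : Finset ι} {f : ι → α} {i j : ι} (hi : i ∈ s)
    (hj : j ∈ s) (hij : IsCoprime (f i) (f j)) : s.gcd f = 1 := by
  rw [← normalize_gcd, normalize_eq_one]
  exact hij.isUnit_of_dvd' (gcd_dvd hi) (gcd_dvd hj)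

theorem Nat.Coprime.natCast_ne_zero_or {a b p : ℕ} (hab : a.Coprime b) (hp : p.Prime) :
    (a : ZMod p) ≠ 0 ∨ (b : ZMod p) ≠ 0 := by
  by_contra! h
  simp only [ZMod.natCast_eq_zero_iff] at h
  exact hp.one_lt.ne' (Nat.eq_one_of_dvd_coprimes hab h.1 h.2)

theorem isLocSolv_of_coprime {a b c d : ℕ} (ha : 0 < a) (hb : 0 < b) (hc : 0 < c)
    (hd : 0 < d) (hab : a.Coprime b) (hcd : c.Coprime d) (heven : Even (a + b + c + d)) :
    IsLocSolv ![(a : ℤ), b, c, -d] := by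
  refine ⟨⟨fun i => ?_, ?_⟩, ?_, fun p hp => ?_⟩
  · fin_cases i <;> simp <;> omega
  · exact gcd_eq_one_of_isCoprime (i := 0) (j := 1) (mem_univ _) (mem_univ _)
      (by simpa using Nat.isCoprime_iff_coprime.mpr hab)
  · rintro (h | h)
    · have : (0 : ℤ) < -d := h 3
      omega
    · have : (a : ℤ) < 0 := h 0
      omega
  rcases hp.eq_two_or_odd' with rfl | hodd
  · apply exists_units_sum_intCast_mul_eq_zero_of_dvd
    rw [even_iff_two_dvd] at heven
    simp only [Fin.sum_univ_four, Matrix.cons_val]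
    omega
  have := Fact.mk hp
  have hF : 2 < Fintype.card (ZMod p) := by
    rw [ZMod.card]
    exact lt_of_le_of_ne hp.two_le (by rintro rfl; exact absurd hodd (by decide))
  obtain ⟨i, hi2, hi⟩ :
      ∃ i : Fin 4, i.val < 2 ∧ ((![(a : ℤ), b, c, -d] i : ℤ) : ZMod p) ≠ 0 := by
    rcases hab.natCast_ne_zero_or hp with h | h
    · exact ⟨0, by decide, by simpa using h⟩
    · exact ⟨1, by decide, by simpa using h⟩
  obtain ⟨j, hj2, hj⟩ :
      ∃ j : Fin 4, 2 ≤ j.val ∧ ((![(a : ℤ), b, c, -d] j : ℤ) : ZMod p) ≠ 0 := by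
    rcases hcd.natCast_ne_zero_or hp with h | h
    · exact ⟨2, by decide, by simpa using h⟩
    · exact ⟨3, by decide, by simpa using h⟩
  exact exists_units_sum_mul_eq_zero hF _ (Fin.ne_of_val_ne (by omega)) hi hj

theorem sum_range_inv_sq_two_mul_add_three_le (n : ℕ) :
    ∑ k ∈ range n, (1 : ℝ) / (2 * k + 3) ^ 2 ≤ 1 / 4 - 1 / (4 * ((n : ℝ) + 1)) := by
  induction n with
  | zero => norm_num
  | succ n ih =>
    rw [sum_range_succ]
    -- telescoping: `(2n+3)² ≥ 4(n+1)(n+2)`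
    have : (1 : ℝ) / (2 * n + 3) ^ 2 ≤ 1 / (4 * (n + 1)) - 1 / (4 * (n + 1 + 1)) := by
      rw [show (1 : ℝ) / (4 * (n + 1)) - 1 / (4 * (n + 1 + 1)) = 1 / (4 * (n + 1) * (n + 2)) by
        field_simp; ring]
      exact one_div_le_one_div_of_le (by positivity) (by nlinarith)
    push_cast
    linarith

theorem sum_prime_inv_sq_le_half (N : ℕ) :
    ∑ p ∈ Ioc 0 N with p.Prime, (1 : ℝ) / p ^ 2 ≤ 1 / 2 := by
  have hsub :
      {p ∈ Ioc 0 N | p.Prime} ⊆ insert 2 ((range N).image fun k : ℕ => 2 * k + 3) := by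
    intro p hp
    simp only [mem_filter, mem_Ioc] at hp
    rcases hp.2.eq_two_or_odd' with rfl | ⟨k, rfl⟩
    · exact mem_insert_self _ _
    · have : k ≠ 0 := by rintro rfl; exact Nat.not_prime_one hp.2
      exact mem_insert_of_mem (mem_image.mpr ⟨k - 1, mem_range.mpr (by omega), by omega⟩)
  calc ∑ p ∈ Ioc 0 N with p.Prime, (1 : ℝ) / p ^ 2
      ≤ ∑ p ∈ insert 2 ((range N).image fun k : ℕ => 2 * k + 3), (1 : ℝ) / p ^ 2 :=
        sum_le_sum_of_subset_of_nonneg hsub fun _ _ _ => by positivity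
    _ = 1 / 4 + ∑ k ∈ range N, (1 : ℝ) / (2 * k + 3) ^ 2 := by
        rw [sum_insert (by simp), sum_image (by intro _ _ _ _ h; simpa using h)]
        push_cast; norm_num
    _ ≤ 1 / 2 := by
        have := sum_range_inv_sq_two_mul_add_three_le N
        have : (0 : ℝ) ≤ 1 / (4 * ((N : ℝ) + 1)) := by positivity
        linarith

def coprimePairs (N : ℕ) : Finset (ℕ × ℕ) := {q ∈ Ioc 0 N ×ˢ Ioc 0 N | q.1.Coprime q.2}

theorem card_not_coprime_le (N : ℕ) :
    #{q ∈ Ioc 0 N ×ˢ Ioc 0 N | ¬ q.1.Coprime q.2} ≤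
      ∑ p ∈ Ioc 0 N with p.Prime, (N / p) ^ 2 := by
  have hsub : {q ∈ Ioc 0 N ×ˢ Ioc 0 N | ¬ q.1.Coprime q.2} ⊆
      {p ∈ Ioc 0 N | p.Prime}.biUnion fun p =>
        {x ∈ Ioc 0 N | p ∣ x} ×ˢ {x ∈ Ioc 0 N | p ∣ x} := by
    rintro ⟨a, b⟩ hab
    simp only [mem_filter, mem_product, mem_Ioc] at hab
    obtain ⟨⟨⟨ha0, haN⟩, hb0, hbN⟩, hab⟩ := hab
    have hp := Nat.minFac_prime hab
    have hpa := (Nat.minFac_dvd _).trans (Nat.gcd_dvd_left a b)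
    have hpb := (Nat.minFac_dvd _).trans (Nat.gcd_dvd_right a b)
    simp only [mem_biUnion, mem_filter, mem_product, mem_Ioc]
    exact ⟨_, ⟨⟨hp.pos, (Nat.le_of_dvd ha0 hpa).trans haN⟩, hp⟩,
      ⟨⟨ha0, haN⟩, hpa⟩, ⟨hb0, hbN⟩, hpb⟩
  refine (card_le_card hsub).trans (card_biUnion_le.trans_eq (sum_congr rfl fun p _ => ?_))
  rw [card_product, Nat.Ioc_filter_dvd_card_eq_div, sq]

theorem sq_le_two_mul_card_coprimePairs (N : ℕ) : N ^ 2 ≤ 2 * #(coprimePairs N) := by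
  have hsplit : #(coprimePairs N) + #{q ∈ Ioc 0 N ×ˢ Ioc 0 N | ¬ q.1.Coprime q.2} = N ^ 2 := by
    rw [coprimePairs, card_filter_add_card_filter_not, card_product, Nat.card_Ioc, Nat.sub_zero, sq]
  have hbad : (#{q ∈ Ioc 0 N ×ˢ Ioc 0 N | ¬ q.1.Coprime q.2} : ℝ) ≤ N ^ 2 / 2 :=
    calc (#{q ∈ Ioc 0 N ×ˢ Ioc 0 N | ¬ q.1.Coprime q.2} : ℝ)
        ≤ ∑ p ∈ Ioc 0 N with p.Prime, ((N / p : ℕ) : ℝ) ^ 2 := by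
          exact_mod_cast card_not_coprime_le N
      _ ≤ ∑ p ∈ Ioc 0 N with p.Prime, (N : ℝ) ^ 2 * (1 / p ^ 2) := by
          gcongr with p
          rw [← div_eq_mul_one_div, ← div_pow]
          gcongr
          exact Nat.cast_div_le
      _ ≤ N ^ 2 / 2 := by
          rw [← mul_sum]
          nlinarith [sum_prime_inv_sq_le_half N, sq_nonneg (N : ℝ)]
  have hsplit' := congrArg ((↑) : ℕ → ℝ) hsplit
  push_cast at hsplit'
  have : (N : ℝ) ^ 2 ≤ 2 * #(coprimePairs N) := by linarith
  exact_mod_cast this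

theorem Finset.exists_subset_card_le_two_mul_forall_iff {α : Type*} (s : Finset α)
    (P : α → Prop) [DecidablePred P] :
    ∃ t ⊆ s, #s ≤ 2 * #t ∧ ∀ x ∈ t, ∀ y ∈ t, (P x ↔ P y) := by
  have hsplit : #{x ∈ s | P x} + #{x ∈ s | ¬ P x} = #s := card_filter_add_card_filter_not P
  rcases le_total #{x ∈ s | ¬ P x} #{x ∈ s | P x} with h | h
  · exact ⟨{x ∈ s | P x}, filter_subset _ _, by omega, fun x hx y hy => by simp_all⟩
  · exact ⟨{x ∈ s | ¬ P x}, filter_subset _ _, by omega, fun x hx y hy => by simp_all⟩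

theorem abs_le_znorm (a : Fin 4 → ℤ) (i : Fin 4) : |(a i : ℝ)| ≤ znorm a :=
  Real.abs_le_sqrt (single_le_sum (fun j _ => sq_nonneg (a j : ℝ)) (mem_univ i))

theorem znorm_le_two_mul {a : Fin 4 → ℤ} {M : ℝ} (h : ∀ i, |(a i : ℝ)| ≤ M) :
    znorm a ≤ 2 * M := by
  have hM : 0 ≤ M := (abs_nonneg _).trans (h 0)
  calc znorm a ≤ Real.sqrt ((2 * M) ^ 2) := by
        refine Real.sqrt_le_sqrt ?_
        calc ∑ i, (a i : ℝ) ^ 2 ≤ ∑ _i : Fin 4, M ^ 2 :=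
              sum_le_sum fun i _ => sq_abs (a i : ℝ) ▸ pow_le_pow_left₀ (abs_nonneg _) (h i) 2
          _ = (2 * M) ^ 2 := by simp; ring
    _ = 2 * M := Real.sqrt_sq (by positivity)

theorem LSet_subset_piFinset (A : ℝ) :
    LSet A ⊆ Fintype.piFinset fun _ : Fin 4 => Icc (-(⌊A⌋₊ : ℤ)) ⌊A⌋₊ := by
  intro a ha
  simp only [mem_coe, Fintype.mem_piFinset, mem_Icc]
  intro i
  have : (a i).natAbs ≤ ⌊A⌋₊ := Nat.le_floor <| by
    rw [Nat.cast_natAbs, Int.cast_abs]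
    exact (abs_le_znorm a i).trans ha.2
  omega

theorem LSet_finite (A : ℝ) : (LSet A).Finite :=
  (finite_toSet _).subset (LSet_subset_piFinset A)

theorem ncard_LSet_le (A : ℝ) : (LSet A).ncard ≤ (2 * ⌊A⌋₊ + 1) ^ 4 := by
  refine (Set.ncard_le_ncard (LSet_subset_piFinset A) (finite_toSet _)).trans_eq ?_
  rw [Set.ncard_coe_finset, Fintype.card_piFinset, prod_const, Int.card_Icc, card_univ,
    Fintype.card_fin]
  congr 1
  omega

theorem LlocSet_subset_LSet (A : ℝ) : LlocSet A ⊆ LSet A := fun _ ha => ⟨ha.1.1, ha.2⟩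

def quadOfPairs (q : (ℕ × ℕ) × (ℕ × ℕ)) : Fin 4 → ℤ := ![q.1.1, q.1.2, q.2.1, -q.2.2]

theorem quadOfPairs_injective : Function.Injective quadOfPairs := by
  rintro ⟨⟨a, b⟩, c, d⟩ ⟨⟨a', b'⟩, c', d'⟩ h
  have h0 := congrFun h 0
  have h1 := congrFun h 1
  have h2 := congrFun h 2
  have h3 := congrFun h 3
  simp_all [quadOfPairs]

theorem quadOfPairs_mem_LlocSet {N : ℕ} {A : ℝ} (hNA : 2 * N ≤ A) {a b c d : ℕ}
    (hab : (a, b) ∈ coprimePairs N) (hcd : (c, d) ∈ coprimePairs N)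
    (heven : Even (a + b + c + d)) : quadOfPairs ((a, b), (c, d)) ∈ LlocSet A := by
  simp only [coprimePairs, mem_filter, mem_product, mem_Ioc] at hab hcd
  refine ⟨isLocSolv_of_coprime (a := a) (b := b) (c := c) (d := d) (by omega) (by omega)
    (by omega) (by omega) hab.2 hcd.2 heven,
    (znorm_le_two_mul (M := N) fun i => ?_).trans hNA⟩
  fin_cases i <;> simp [quadOfPairs] <;> exact_mod_cast (by omega)

theorem floor_half_pow_four_le_sixteen_mul_ncard_LlocSet {A : ℝ} (hA : 0 ≤ A) :
    ⌊A / 2⌋₊ ^ 4 ≤ 16 * (LlocSet A).ncard := by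
  set N := ⌊A / 2⌋₊
  have hNA : 2 * (N : ℝ) ≤ A := by linarith [Nat.floor_le (by positivity : 0 ≤ A / 2)]
  -- the parity of `a + b` is constant on `t`, which makes `a + b + c + d` even
  obtain ⟨t, htC, hCt, hpar⟩ := (coprimePairs N).exists_subset_card_le_two_mul_forall_iff
    fun q => Even (q.1 + q.2)
  have himage : ↑((t ×ˢ t).image quadOfPairs) ⊆ LlocSet A := by
    simp only [coe_image, coe_product, Set.image_subset_iff]
    rintro ⟨⟨a, b⟩, c, d⟩ ⟨hab, hcd⟩
    refine quadOfPairs_mem_LlocSet hNA (htC hab) (htC hcd) ?_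
    rw [add_assoc, Nat.even_add]
    exact hpar _ hab _ hcd
  have hN := sq_le_two_mul_card_coprimePairs N
  calc N ^ 4 = (N ^ 2) ^ 2 := by ring
    _ ≤ (4 * #t) ^ 2 := Nat.pow_le_pow_left (by omega) 2
    _ = 16 * #((t ×ˢ t).image quadOfPairs) := by
        rw [card_image_of_injective _ quadOfPairs_injective, card_product]; ring
    _ ≤ 16 * (LlocSet A).ncard := by
        rw [← Set.ncard_coe_finset]
        exact Nat.mul_le_mul_left 16
          (Set.ncard_le_ncard himage ((LSet_finite A).subset (LlocSet_subset_LSet A)))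

theorem one_div_le_ncard_LlocSet_div_ncard_LSet {A : ℝ} (hA : 6 ≤ A) :
    1 / 104976 ≤ ((LlocSet A).ncard : ℝ) / (LSet A).ncard := by
  have hN : A / 3 ≤ ⌊A / 2⌋₊ := by linarith [Nat.lt_floor_add_one (A / 2)]
  have hLloc : (A / 3) ^ 4 / 16 ≤ (LlocSet A).ncard := by
    have := floor_half_pow_four_le_sixteen_mul_ncard_LlocSet (by linarith : 0 ≤ A)
    have : (⌊A / 2⌋₊ : ℝ) ^ 4 ≤ 16 * (LlocSet A).ncard := by exact_mod_cast this
    have : (A / 3) ^ 4 ≤ (⌊A / 2⌋₊ : ℝ) ^ 4 := pow_le_pow_left₀ (by positivity) hN 4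
    linarith
  have hL : ((LSet A).ncard : ℝ) ≤ (3 * A) ^ 4 := by
    have := ncard_LSet_le A
    have : ((LSet A).ncard : ℝ) ≤ (2 * ⌊A⌋₊ + 1) ^ 4 := by exact_mod_cast this
    refine this.trans (pow_le_pow_left₀ (by positivity) ?_ 4)
    linarith [Nat.floor_le (by linarith : 0 ≤ A)]
  have hLpos : (0 : ℝ) < (LSet A).ncard := by
    refine (lt_of_lt_of_le (by positivity) hLloc).trans_le ?_
    exact_mod_cast Set.ncard_le_ncard (LlocSet_subset_LSet A) (LSet_finite A)
  calc (1 : ℝ) / 104976 = (A / 3) ^ 4 / 16 / (3 * A) ^ 4 := by field_simp; norm_num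
    _ ≤ _ := div_le_div₀ (by positivity) hLloc hLpos hL

/-- Theorem 1.2: `liminf_{A→∞} #𝕃^loc(A)/#𝕃(A) > 0`. -/
theorem locally_solvable_positive_proportion :
    0 < Filter.liminf
      (fun A : ℝ => (Set.ncard (LlocSet A) : ℝ) / (Set.ncard (LSet A) : ℝ))
      Filter.atTop := by
  have hle : ∀ A : ℝ, ((LlocSet A).ncard : ℝ) / (LSet A).ncard ≤ 1 := fun A =>
    div_le_one_of_le₀
      (by exact_mod_cast Set.ncard_le_ncard (LlocSet_subset_LSet A) (LSet_finite A))
      (Nat.cast_nonneg _)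
  refine (by norm_num : (0 : ℝ) < 1 / 104976).trans_le
    (le_liminf_of_le (isCoboundedUnder_ge_of_le _ hle) ?_)
  exact eventually_atTop.mpr ⟨6, fun A hA => one_div_le_ncard_LlocSet_div_ncard_LSet hA⟩
end

section
/- There exists a constant C > 0 such that for every locally solvable tuple a ∈ 𝕃^loc and every sufficiently large B, 𝔖_a(B) ≥ C. -/
open Filter MeasureTheory Finset Topology
open scoped ENNReal

/-!
By the Chinese remainder theorem `σ(a, ·)` is multiplicative, so `𝔖_a(B)` is the product of the
local factors `σ(a, p ^ k)` over the primes `p ≤ w`. As `gcd(a) = 1` and `a` is solvable modulo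
`p`, two coefficients `a_i, a_j` are units modulo `p`. Choosing the other three coordinates so that
`∑_{l ≠ i} a_l b_l` is a unit modulo `p ^ k` (this excludes one residue class modulo `p` for
`b_j`) and solving for `b_i` gives `φ(p^k)² (φ(p^k) - p^(k-1))` unit solutions, that is
`σ(a, p ^ k) ≥ 1 - 1/(p-1)²`. For `p = 2` every choice works, because units are odd and
`a_i ≡ ∑_{l ≠ i} a_l (mod 2)`, so `σ(a, 2 ^ k) ≥ 2`. Finally the product of `1 - 1/(p-1)²`
over the odd primes `p ≤ N` is at least `∏_{2 ≤ m < N} (1 - 1/m²) = N / (2(N - 1)) ≥ 1/2`.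
-/

section UnitSolutions

variable {ι : Type*} [Fintype ι]

def unitSolutions (a : ι → ℤ) (Q : ℕ) : Set (ι → (ZMod Q)ˣ) :=
  {b | ∑ i, (a i : ZMod Q) * b i = 0}

def unitSolutionsMulEquiv {m n : ℕ} (h : m.Coprime n) (a : ι → ℤ) :
    unitSolutions a (m * n) ≃ unitSolutions a m × unitSolutions a n :=
  let e := ZMod.chineseRemainder h
  let G : (ι → (ZMod (m * n))ˣ) ≃ (ι → (ZMod m)ˣ) × (ι → (ZMod n)ˣ) :=
    (Equiv.piCongrRight fun _ =>
      ((Units.mapEquiv e.toMulEquiv).trans MulEquiv.prodUnits).toEquiv).trans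
      (Equiv.arrowProdEquivProdArrow _ _ _)
  (G.subtypeEquiv fun b => by
    have hG : ∀ i, e (b i) = (((G b).1 i : ZMod m), ((G b).2 i : ZMod n)) := fun _ => rfl
    simp only [unitSolutions, Set.mem_ofPred_eq, ← map_eq_zero_iff e e.injective, map_sum,
      map_mul, map_intCast, hG, Prod.ext_iff, Prod.fst_sum, Prod.snd_sum, Prod.fst_mul,
      Prod.snd_mul, Prod.fst_intCast, Prod.snd_intCast, Prod.fst_zero, Prod.snd_zero]).trans
    (Equiv.subtypeProdEquivProd)

theorem card_unitSolutions_mul {m n : ℕ} (h : m.Coprime n) (a : ι → ℤ) :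
    Nat.card (unitSolutions a (m * n)) =
      Nat.card (unitSolutions a m) * Nat.card (unitSolutions a n) := by
  rw [Nat.card_congr (unitSolutionsMulEquiv h a), Nat.card_prod]

theorem card_unitSolutions_one (a : ι → ℤ) : Nat.card (unitSolutions a 1) = 1 := by
  have : unitSolutions a 1 = Set.univ :=
    Set.eq_univ_of_forall fun _ => Subsingleton.elim (α := ZMod 1) _ _
  rw [this, Nat.card_univ]
  exact Nat.card_unique

theorem exists_ne_intCast_ne_zero_of_unitSolutions_nonempty {p : ℕ} [Fact p.Prime]
    {a : ι → ℤ} (hgcd : univ.gcd a = 1) (hsol : (unitSolutions a p).Nonempty) :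
    ∃ i j, i ≠ j ∧ (a i : ZMod p) ≠ 0 ∧ (a j : ZMod p) ≠ 0 := by
  obtain ⟨i, hi⟩ : ∃ i, (a i : ZMod p) ≠ 0 := by
    by_contra! h
    have : (p : ℤ) ∣ univ.gcd a :=
      Finset.dvd_gcd fun i _ => (ZMod.intCast_zmod_eq_zero_iff_dvd _ _).1 (h i)
    rw [hgcd, ← Nat.cast_one, Int.natCast_dvd_natCast] at this
    exact (Fact.out : p.Prime).not_dvd_one this
  obtain ⟨x, hx⟩ := hsol
  by_contra! h
  have hsum : ∑ l, (a l : ZMod p) * x l = a i * x i :=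
    Fintype.sum_eq_single i fun l hl => by rw [h i l (Ne.symm hl) hi, zero_mul]
  exact mul_ne_zero hi (x i).ne_zero (hsum ▸ hx)

end UnitSolutions

theorem sigmaA_eq (a : Fin 4 → ℤ) (Q : ℕ) :
    sigmaA a Q = Q / (Q.totient : ℝ) ^ 4 * Nat.card (unitSolutions a Q) := rfl

/-- `σ(a, ·)` vanishes at `0` (as `0 / 0`), so it is an arithmetic function. -/
noncomputable def sigmaAArith (a : Fin 4 → ℤ) : ArithmeticFunction ℝ :=
  ⟨sigmaA a, by simp [sigmaA]⟩

theorem isMultiplicative_sigmaAArith (a : Fin 4 → ℤ) : (sigmaAArith a).IsMultiplicative := by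
  refine ⟨?_, fun {m n} h => ?_⟩
  · simp only [sigmaAArith, ArithmeticFunction.coe_mk, sigmaA_eq, card_unitSolutions_one]
    simp
  · simp only [sigmaAArith, ArithmeticFunction.coe_mk, sigmaA_eq, Nat.totient_mul h,
      card_unitSolutions_mul h]
    push_cast
    ring

theorem sigmaA_prod_pow (a : Fin 4 → ℤ) {s : Finset ℕ} (hs : ∀ p ∈ s, p.Prime)
    (e : ℕ → ℕ) :
    sigmaA a (∏ p ∈ s, p ^ e p) = ∏ p ∈ s, sigmaA a (p ^ e p) :=
  (isMultiplicative_sigmaAArith a).map_prod _ s fun p hp q hq hpq =>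
    Nat.Coprime.pow _ _ ((Nat.coprime_primes (hs p hp) (hs q hq)).2 hpq)

theorem MonoidHom.card_fiber_mul_card_of_surjective {G M : Type*} [Group G] [Fintype G]
    [Group M] [Fintype M] [DecidableEq M] (f : G →* M) (hf : Function.Surjective f) (y : M) :
    #{g | f g = y} * Fintype.card M = Fintype.card G := by
  rw [← card_univ (α := G), card_eq_sum_card_fiberwise (s := univ) (t := univ)
      fun g _ => mem_univ (f g),
    sum_congr rfl fun y' _ => MonoidHom.card_fiber_eq_of_mem_range f (hf y') (hf y),
    sum_const, smul_eq_mul, card_univ, mul_comm]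

section PrimePower

variable {p k : ℕ} [Fact p.Prime]

theorem ZMod.isUnit_iff_castHom_ne_zero_of_prime_pow (hk : k ≠ 0) (y : ZMod (p ^ k)) :
    IsUnit y ↔ ZMod.castHom (dvd_pow_self p hk) (ZMod p) y ≠ 0 := by
  have : NeZero (p ^ k) := ⟨pow_ne_zero k (Fact.out : p.Prime).ne_zero⟩
  rw [← ZMod.natCast_zmod_val y, ZMod.isUnit_natCast_iff_not_dvd_pow Fact.out
    (Nat.pos_of_ne_zero hk), map_natCast, ne_eq, ZMod.natCast_eq_zero_iff]

theorem ZMod.card_fiber_unitsMap_prime_pow (hk : k ≠ 0) (y : (ZMod p)ˣ) :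
    #{x | ZMod.unitsMap (dvd_pow_self p hk) x = y} = p ^ (k - 1) := by
  have : NeZero (p ^ k) := ⟨pow_ne_zero k (Fact.out : p.Prime).ne_zero⟩
  have h := (ZMod.unitsMap (dvd_pow_self p hk)).card_fiber_mul_card_of_surjective
    (ZMod.unitsMap_surjective _) y
  rw [ZMod.card_units_eq_totient, ZMod.card_units_eq_totient, Nat.totient_prime_pow Fact.out
    (Nat.pos_of_ne_zero hk), Nat.totient_prime Fact.out] at h
  exact Nat.eq_of_mul_eq_mul_right (Nat.sub_pos_of_lt (Fact.out : p.Prime).one_lt) h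

theorem card_not_isUnit_mul_add_le (hk : k ≠ 0) {α : ZMod (p ^ k)}
    (hα : ZMod.castHom (dvd_pow_self p hk) (ZMod p) α ≠ 0) (s : ZMod (p ^ k)) :
    #{x : (ZMod (p ^ k))ˣ | ¬IsUnit (α * x + s)} ≤ p ^ (k - 1) := by
  obtain h | ⟨x₀, hx₀⟩ :=
    eq_empty_or_nonempty {x : (ZMod (p ^ k))ˣ | ¬IsUnit (α * x + s)}
  · simp [h]
  rw [← ZMod.card_fiber_unitsMap_prime_pow hk (ZMod.unitsMap (dvd_pow_self p hk) x₀)]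
  refine card_le_card fun x hx => ?_
  simp only [mem_filter, mem_univ, true_and, ZMod.isUnit_iff_castHom_ne_zero_of_prime_pow hk,
    not_not] at hx hx₀ ⊢
  rw [map_add, map_mul] at hx hx₀
  refine Units.ext (mul_left_cancel₀ hα ?_)
  change _ * ZMod.castHom (dvd_pow_self p hk) (ZMod p) x =
    _ * ZMod.castHom (dvd_pow_self p hk) (ZMod p) x₀
  linear_combination hx - hx₀

theorem card_isUnit_mul_add_ge (hk : k ≠ 0) {α : ZMod (p ^ k)}
    (hα : ZMod.castHom (dvd_pow_self p hk) (ZMod p) α ≠ 0) (s : ZMod (p ^ k)) :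
    (p ^ k).totient - p ^ (k - 1) ≤ #{x : (ZMod (p ^ k))ˣ | IsUnit (α * x + s)} := by
  have : NeZero (p ^ k) := ⟨pow_ne_zero k (Fact.out : p.Prime).ne_zero⟩
  have h := card_filter_add_card_filter_not (s := univ)
    fun x : (ZMod (p ^ k))ˣ => IsUnit (α * x + s)
  rw [card_univ, ZMod.card_units_eq_totient] at h
  have := card_not_isUnit_mul_add_le hk hα s
  omega

end PrimePower

section Tuples

variable {n : ℕ}

theorem card_isUnit_sum_succAbove_le_card_unitSolutions {Q : ℕ} [NeZero Q]
    {a : Fin (n + 1) → ℤ} {i : Fin (n + 1)} (hi : IsUnit (a i : ZMod Q)) :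
    #{c : Fin n → (ZMod Q)ˣ | IsUnit (∑ l, (a (i.succAbove l) : ZMod Q) * c l)} ≤
      Nat.card (unitSolutions a Q) := by
  rw [← Fintype.card_subtype, ← Nat.card_eq_fintype_card]
  refine Nat.card_le_card_of_injective
    (fun c => ⟨Fin.insertNth i (-c.2.unit * hi.unit⁻¹) c.1, ?_⟩) fun c c' h => ?_
  · simp only [unitSolutions, Set.mem_ofPred_eq, Fin.sum_univ_succAbove _ i,
      Fin.insertNth_apply_same, Fin.insertNth_apply_succAbove, Units.val_mul, Units.val_neg,
      IsUnit.unit_spec]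
    rw [mul_left_comm, hi.mul_val_inv]
    ring
  · exact Subtype.ext (Fin.insertNth_injective2 (α := fun _ => (ZMod Q)ˣ)
      (Subtype.ext_iff.mp h)).2

variable {p k : ℕ} [Fact p.Prime]

theorem card_isUnit_sum_ge (hk : k ≠ 0) {a : Fin (n + 1) → ℤ} {j : Fin (n + 1)}
    (hj : (a j : ZMod p) ≠ 0) :
    (p ^ k).totient ^ n * ((p ^ k).totient - p ^ (k - 1)) ≤
      #{c : Fin (n + 1) → (ZMod (p ^ k))ˣ | IsUnit (∑ l, (a l : ZMod (p ^ k)) * c l)} := by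
  have : NeZero (p ^ k) := ⟨pow_ne_zero k (Fact.out : p.Prime).ne_zero⟩
  calc (p ^ k).totient ^ n * ((p ^ k).totient - p ^ (k - 1))
      = ∑ _r : Fin n → (ZMod (p ^ k))ˣ, ((p ^ k).totient - p ^ (k - 1)) := by
        simp [ZMod.card_units_eq_totient]
    _ ≤ ∑ r : Fin n → (ZMod (p ^ k))ˣ, #{x : (ZMod (p ^ k))ˣ |
          IsUnit ((a j : ZMod (p ^ k)) * x + ∑ l, (a (j.succAbove l) : ZMod (p ^ k)) * r l)} :=
        sum_le_sum fun r _ => card_isUnit_mul_add_ge hk (by rwa [map_intCast]) _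
    _ = #(univ.sigma fun r : Fin n → (ZMod (p ^ k))ˣ => ({x : (ZMod (p ^ k))ˣ |
          IsUnit ((a j : ZMod (p ^ k)) * x + ∑ l, (a (j.succAbove l) : ZMod (p ^ k)) * r l)} :
            Finset _)) := (card_sigma _ _).symm
    _ ≤ _ := by
        refine card_le_card_of_injOn (fun rx => Fin.insertNth j rx.2 rx.1) ?_ ?_
        · intro rx hrx
          simp only [coe_filter, mem_univ, true_and] at hrx ⊢
          simpa [Fin.sum_univ_succAbove _ j] using hrx
        · intro rx _ rx' _ h
          obtain ⟨hx, hr⟩ := Fin.insertNth_injective2 h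
          exact Sigma.ext hr (heq_of_eq hx)

theorem isUnit_sum_succAbove_of_two_pow (hk : k ≠ 0) {a : Fin (n + 1) → ℤ}
    (hsol : (unitSolutions a 2).Nonempty) {i : Fin (n + 1)} (hi : (a i : ZMod 2) ≠ 0)
    (c : Fin n → (ZMod (2 ^ k))ˣ) :
    IsUnit (∑ l, (a (i.succAbove l) : ZMod (2 ^ k)) * c l) := by
  have unit_eq_one : ∀ z : ZMod 2, IsUnit z → z = 1 := by decide
  obtain ⟨x, hx⟩ := hsol
  simp only [unitSolutions, Set.mem_ofPred_eq, fun l => unit_eq_one _ (x l).isUnit, mul_one,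
    Fin.sum_univ_succAbove _ i] at hx
  rw [ZMod.isUnit_iff_castHom_ne_zero_of_prime_pow hk, map_sum]
  have hc : ∀ l, ZMod.castHom (dvd_pow_self 2 hk) (ZMod 2) (c l) = 1 :=
    fun l => unit_eq_one _ ((c l).isUnit.map _)
  simp only [map_mul, map_intCast, hc, mul_one]
  intro h
  exact hi (by linear_combination hx - h)

end Tuples

noncomputable def localBound (p : ℕ) : ℝ :=
  if p = 2 then 1 else 1 - 1 / ((p : ℝ) - 1) ^ 2

section TotientArithmetic

variable {p : ℕ}

theorem cast_totient_prime_pow_succ (hp : p.Prime) (m : ℕ) :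
    ((p ^ (m + 1)).totient : ℝ) = p ^ m * (p - 1) := by
  rw [Nat.totient_prime_pow_succ hp, Nat.cast_mul, Nat.cast_sub hp.one_le]
  push_cast
  ring

theorem prime_pow_div_totient_pow_four_mul_totient_pow_three (hp : p.Prime) (m : ℕ) :
    ((p ^ (m + 1) : ℕ) : ℝ) / ((p ^ (m + 1)).totient : ℝ) ^ 4 *
      (((p ^ (m + 1)).totient ^ 3 : ℕ) : ℝ) = p / (p - 1) := by
  have hp0 : (p : ℝ) ≠ 0 := by exact_mod_cast hp.ne_zero
  have hp1 : (p : ℝ) - 1 ≠ 0 := sub_ne_zero.2 (by exact_mod_cast hp.one_lt.ne')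
  rw [Nat.cast_pow, Nat.cast_pow, cast_totient_prime_pow_succ hp]
  field_simp
  ring

theorem prime_pow_div_totient_pow_four_mul_eq (hp : p.Prime) (m : ℕ) :
    ((p ^ (m + 1) : ℕ) : ℝ) / ((p ^ (m + 1)).totient : ℝ) ^ 4 *
      (((p ^ (m + 1)).totient ^ 2 * ((p ^ (m + 1)).totient - p ^ m) : ℕ) : ℝ) =
      1 - 1 / ((p : ℝ) - 1) ^ 2 := by
  have hp0 : (p : ℝ) ≠ 0 := by exact_mod_cast hp.ne_zero
  have hp1 : (p : ℝ) - 1 ≠ 0 := sub_ne_zero.2 (by exact_mod_cast hp.one_lt.ne')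
  have hle : p ^ m ≤ (p ^ (m + 1)).totient := by
    rw [Nat.totient_prime_pow_succ hp]
    exact Nat.le_mul_of_pos_right _ (Nat.sub_pos_of_lt hp.one_lt)
  rw [Nat.cast_mul, Nat.cast_sub hle, Nat.cast_pow, Nat.cast_pow, Nat.cast_pow,
    cast_totient_prime_pow_succ hp]
  field_simp
  ring

end TotientArithmetic

theorem le_sigmaA_of_le_card {a : Fin 4 → ℤ} {Q N : ℕ}
    (h : N ≤ Nat.card (unitSolutions a Q)) :
    (Q : ℝ) / (Q.totient : ℝ) ^ 4 * N ≤ sigmaA a Q :=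
  mul_le_mul_of_nonneg_left (by exact_mod_cast h) (by positivity)

theorem localBound_le_sigmaA {p k : ℕ} [Fact p.Prime] (hk : k ≠ 0) {a : Fin 4 → ℤ}
    (hgcd : univ.gcd a = 1) (hsol : (unitSolutions a p).Nonempty) :
    localBound p ≤ sigmaA a (p ^ k) := by
  have hp : p.Prime := Fact.out
  have : NeZero (p ^ k) := ⟨pow_ne_zero k hp.ne_zero⟩
  obtain ⟨i, j, hij, hi, hj⟩ := exists_ne_intCast_ne_zero_of_unitSolutions_nonempty hgcd hsol
  obtain ⟨j, rfl⟩ := Fin.exists_succAbove_eq hij.symm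
  have hiu : IsUnit (a i : ZMod (p ^ k)) := by
    rwa [ZMod.isUnit_iff_castHom_ne_zero_of_prime_pow hk, map_intCast]
  have hpivot := card_isUnit_sum_succAbove_le_card_unitSolutions hiu
  obtain ⟨m, rfl⟩ : ∃ m, k = m + 1 := ⟨k - 1, by omega⟩
  by_cases hp2 : p = 2
  · have hall : (p ^ (m + 1)).totient ^ 3 ≤ Nat.card (unitSolutions a (p ^ (m + 1))) := by
      subst hp2
      refine le_of_eq_of_le ?_ hpivot
      rw [filter_true_of_mem fun c _ => isUnit_sum_succAbove_of_two_pow hk hsol hi c, card_univ]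
      simp [ZMod.card_units_eq_totient]
    refine le_trans ?_ (le_sigmaA_of_le_card hall)
    rw [prime_pow_div_totient_pow_four_mul_totient_pow_three hp, localBound, if_pos hp2, hp2]
    norm_num
  · have hcount : (p ^ (m + 1)).totient ^ 2 * ((p ^ (m + 1)).totient - p ^ m) ≤
        Nat.card (unitSolutions a (p ^ (m + 1))) :=
      (card_isUnit_sum_ge hk (a := fun l => a (i.succAbove l)) hj).trans hpivot
    refine le_trans (le_of_eq ?_) (le_sigmaA_of_le_card hcount)
    rw [prime_pow_div_totient_pow_four_mul_eq hp, localBound, if_neg hp2]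

theorem localBound_nonneg {m : ℕ} (hm : 2 ≤ m) : 0 ≤ localBound m := by
  unfold localBound
  split_ifs
  · norm_num
  · have : (1 : ℝ) ≤ ((m : ℝ) - 1) ^ 2 := one_le_pow₀ (by
      have : (2 : ℝ) ≤ m := by exact_mod_cast hm
      linarith)
    rw [sub_nonneg]
    exact div_le_one_of_le₀ this (by positivity)

theorem localBound_le_one (m : ℕ) : localBound m ≤ 1 := by
  unfold localBound
  split_ifs
  · rfl
  · exact sub_le_self _ (by positivity)

theorem prod_Icc_localBound {N : ℕ} (hN : 2 ≤ N) :
    ∏ m ∈ Icc 2 N, localBound m = N / (2 * (N - 1)) := by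
  induction N, hN using Nat.le_induction with
  | base => simp [localBound]; norm_num
  | succ N hN ih =>
    have hN' : (2 : ℝ) ≤ N := by exact_mod_cast hN
    rw [prod_Icc_succ_top (by omega), ih, localBound, if_neg (by omega)]
    have : (N : ℝ) ≠ 0 := by linarith
    have : (N : ℝ) - 1 ≠ 0 := by linarith
    push_cast
    rw [add_sub_cancel_right]
    field_simp
    ring

theorem one_half_le_prod_localBound {s : Finset ℕ} (hs : ∀ p ∈ s, 2 ≤ p) :
    1 / 2 ≤ ∏ p ∈ s, localBound p := by
  set N := max 2 (s.sup id)
  have hN : 2 ≤ N := le_max_left _ _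
  have hsub : s ⊆ Icc 2 N := fun p hp =>
    mem_Icc.2 ⟨hs p hp, (le_sup (f := id) hp).trans (le_max_right _ _)⟩
  calc 1 / 2 ≤ (N : ℝ) / (2 * (N - 1)) := by
        have : (2 : ℝ) ≤ N := by exact_mod_cast hN
        rw [div_le_div_iff₀ (by norm_num) (by linarith)]
        linarith
    _ = ∏ m ∈ Icc 2 N, localBound m := (prod_Icc_localBound hN).symm
    _ ≤ ∏ p ∈ s, localBound p := prod_le_prod_of_subset_of_le_one hsub
        (fun m hm => localBound_nonneg (mem_Icc.1 hm).1) fun m _ _ => localBound_le_one m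

/-- Lemma 5.6: the truncated singular series is bounded from below: there is `C > 0`
with `𝔖_a(B) ≥ C` for every locally solvable `a` and all sufficiently large `B`. -/
theorem singular_series_lower_bound :
    ∃ C > (0 : ℝ), ∀ a : Fin 4 → ℤ, IsLocSolv a →
      ∃ B₀ : ℝ, ∀ B : ℝ, B₀ ≤ B → C ≤ Sfrak a B := by
  refine ⟨1 / 2, by norm_num, fun a ⟨⟨_, hgcd⟩, _, hsol⟩ => ⟨0, fun B _ => ?_⟩⟩
  have hprime : ∀ p ∈ (range (⌊wB B⌋₊ + 1)).filter Nat.Prime, p.Prime :=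
    fun p hp => (mem_filter.1 hp).2
  rw [Sfrak, WB, sigmaA_prod_pow a hprime]
  refine (one_half_le_prod_localBound fun p hp => (hprime p hp).two_le).trans
    (prod_le_prod (fun p hp => localBound_nonneg (hprime p hp).two_le) fun p hp => ?_)
  have := Fact.mk (hprime p hp)
  exact localBound_le_sigmaA (Nat.succ_ne_zero _) hgcd (hsol p (hprime p hp))
end

section
/- Let a = (a₁,a₂,a₃,a₄) ∈ (ℤ∖{0})⁴ be such that the aᵢ are not all of the same sign. Then there exists x = (x₁,x₂,x₃,x₄) ∈ ℝ⁴ with all xᵢ > 0, ‖x‖ = 1, ⟨a,x⟩ = 0, and xᵢ ≫ δ for all i, where δ = (minᵢ|aᵢ|)/(maxᵢ|aᵢ|) and the implied constant is absolute (independent of a). -/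
open Filter MeasureTheory Finset Topology
open scoped ENNReal

/-- Lemma 5.7: for `a ∈ (ℤ∖{0})⁴` with coordinates not all of the same sign,
there is `x ∈ ℝ⁴₊` with `‖x‖ = 1`, `⟨a,x⟩ = 0` and `xᵢ ≫ δ`, where
`δ = minᵢ|aᵢ|/maxᵢ|aᵢ|` and the implied constant is absolute. -/
theorem exists_positive_unit_solution :
    ∃ c > (0 : ℝ), ∀ a : Fin 4 → ℤ,
      (∀ i, a i ≠ 0) → ¬ ((∀ i, 0 < a i) ∨ (∀ i, a i < 0)) →
      ∃ x : Fin 4 → ℝ, (∀ i, 0 < x i) ∧ Real.sqrt (∑ i, x i ^ 2) = 1 ∧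
        (∑ i, (a i : ℝ) * x i) = 0 ∧
        ∀ i, c * ((minAbs a : ℝ) / (snorm a : ℝ)) ≤ x i := by
  classical
  refine ⟨1/8, by norm_num, ?_⟩
  intro a ha hsign
  push_neg at hsign
  obtain ⟨hnp, hnn⟩ := hsign
  obtain ⟨j, hj⟩ := hnp
  obtain ⟨k, hk⟩ := hnn
  have hkpos : 0 < a k := lt_of_le_of_ne hk (Ne.symm (ha k))
  set P := Finset.univ.filter (fun i => 0 < a i) with hPdef
  set N := Finset.univ.filter (fun i => ¬ 0 < a i) with hNdef
  have hPpos : (0:ℝ) < P.card := by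
    have : 0 < P.card := Finset.card_pos.mpr ⟨k, by simp [hPdef, hkpos]⟩
    exact_mod_cast this
  have hNpos : (0:ℝ) < N.card := by
    have : 0 < N.card := Finset.card_pos.mpr ⟨j, by simp only [hNdef, Finset.mem_filter, Finset.mem_univ, true_and, not_lt]; exact hj⟩
    exact_mod_cast this
  have hPle : (P.card : ℝ) ≤ 4 := by
    have := le_trans (Finset.card_filter_le Finset.univ (fun i => 0 < a i))
      (by simp : (Finset.univ : Finset (Fin 4)).card ≤ 4)
    exact_mod_cast this
  have hNle : (N.card : ℝ) ≤ 4 := by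
    have := le_trans (Finset.card_filter_le Finset.univ (fun i => ¬ 0 < a i))
      (by simp : (Finset.univ : Finset (Fin 4)).card ≤ 4)
    exact_mod_cast this
  have habs0 : ∀ i, (0:ℝ) < |(a i : ℝ)| := fun i =>
    abs_pos.mpr (by exact_mod_cast ha i)
  have habs : ∀ i, |(a i : ℝ)| = ((a i).natAbs : ℝ) := fun i => by
    rw [Nat.cast_natAbs, Int.cast_abs]
  have hmle : ∀ i, ((minAbs a : ℕ) : ℝ) ≤ |(a i : ℝ)| := fun i => by
    rw [habs i]
    exact_mod_cast Finset.inf'_le _ (Finset.mem_univ i)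
  have hMle : ∀ i, |(a i : ℝ)| ≤ ((snorm a : ℕ) : ℝ) := fun i => by
    rw [habs i]
    exact_mod_cast Finset.le_sup (f := fun i => (a i).natAbs) (Finset.mem_univ i)
  have hm1 : 1 ≤ minAbs a := Finset.le_inf' _ _ fun i _ =>
    Nat.one_le_iff_ne_zero.mpr (Int.natAbs_ne_zero.mpr (ha i))
  have hmpos : (0:ℝ) < (minAbs a : ℝ) := by exact_mod_cast hm1
  have hMpos : (0:ℝ) < (snorm a : ℝ) := lt_of_lt_of_le hmpos (le_trans (hmle 0) (hMle 0))
  -- the unnormalized vector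
  set y : Fin 4 → ℝ := fun i =>
    (if 0 < a i then (N.card : ℝ) else (P.card : ℝ)) / |(a i : ℝ)| with hydef
  have hc1 : ∀ i, (1:ℝ) ≤ (if 0 < a i then (N.card : ℝ) else (P.card : ℝ)) := by
    intro i; split
    · exact_mod_cast hNpos
    · exact_mod_cast hPpos
  have hc4 : ∀ i, (if 0 < a i then (N.card : ℝ) else (P.card : ℝ)) ≤ 4 := by
    intro i; split
    · exact hNle
    · exact hPle
  have hylb : ∀ i, 1 / (snorm a : ℝ) ≤ y i := fun i =>
    div_le_div₀ (le_trans zero_le_one (hc1 i)) (hc1 i) (habs0 i) (hMle i)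
  have hyub : ∀ i, y i ≤ 4 / (minAbs a : ℝ) := fun i =>
    div_le_div₀ (by positivity) (hc4 i) hmpos (hmle i)
  have hypos : ∀ i, 0 < y i := fun i => lt_of_lt_of_le (by positivity) (hylb i)
  -- orthogonality of y
  have hterm : ∀ i, (a i : ℝ) * y i =
      (if 0 < a i then (N.card : ℝ) else -(P.card : ℝ)) := by
    intro i
    by_cases hi : 0 < a i
    · have hpos : (0:ℝ) < (a i : ℝ) := by exact_mod_cast hi
      simp only [hydef, hi, if_true, abs_of_pos hpos]
      field_simp
    · have hilt : a i < 0 := lt_of_le_of_ne (not_lt.mp hi) (ha i)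
      have hneg : (a i : ℝ) < 0 := by exact_mod_cast hilt
      simp only [hydef, hi, if_false, abs_of_neg hneg]
      rw [div_neg, mul_neg, ← mul_div_assoc, mul_div_cancel_left₀ _ hneg.ne]
  have hyorth : ∑ i, (a i : ℝ) * y i = 0 := by
    calc ∑ i, (a i : ℝ) * y i
        = ∑ i, (if 0 < a i then (N.card : ℝ) else -(P.card : ℝ)) :=
          Finset.sum_congr rfl fun i _ => hterm i
      _ = (∑ _i ∈ P, (N.card : ℝ)) + ∑ _i ∈ N, -(P.card : ℝ) := by
          rw [Finset.sum_ite]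
      _ = P.card * N.card + N.card * (-(P.card : ℝ)) := by
          rw [Finset.sum_const, Finset.sum_const, nsmul_eq_mul, nsmul_eq_mul]
      _ = 0 := by ring
  -- normalization
  set T : ℝ := ∑ i, y i ^ 2 with hTdef
  have hTpos : 0 < T := Finset.sum_pos (fun i _ => pow_pos (hypos i) 2) ⟨0, Finset.mem_univ 0⟩
  set S : ℝ := Real.sqrt T with hSdef
  have hSpos : 0 < S := Real.sqrt_pos.mpr hTpos
  have hSub : S ≤ 8 / (minAbs a : ℝ) := by
    have hTub : T ≤ (8 / (minAbs a : ℝ)) ^ 2 := by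
      have : T ≤ ∑ _i : Fin 4, (4 / (minAbs a : ℝ)) ^ 2 :=
        Finset.sum_le_sum fun i _ => by
          have h0 : 0 < y i := hypos i
          exact pow_le_pow_left₀ h0.le (hyub i) 2
      calc T ≤ ∑ _i : Fin 4, (4 / (minAbs a : ℝ)) ^ 2 := this
        _ = 4 * (4 / (minAbs a : ℝ)) ^ 2 := by
            rw [Finset.sum_const]; simp
        _ = (8 / (minAbs a : ℝ)) ^ 2 := by ring
    calc S ≤ Real.sqrt ((8 / (minAbs a : ℝ)) ^ 2) := Real.sqrt_le_sqrt hTub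
      _ = 8 / (minAbs a : ℝ) := Real.sqrt_sq (by positivity)
  refine ⟨fun i => y i / S, fun i => div_pos (hypos i) hSpos, ?_, ?_, ?_⟩
  · have hS2 : S ^ 2 = T := Real.sq_sqrt hTpos.le
    have h1 : ∑ i, (y i / S) ^ 2 = 1 := by
      calc ∑ i, (y i / S) ^ 2 = (∑ i, y i ^ 2) / S ^ 2 := by
            simp only [div_pow]
            rw [← Finset.sum_div]
        _ = 1 := by rw [hS2, ← hTdef]; exact div_self hTpos.ne'
    rw [h1, Real.sqrt_one]
  · have hsum : ∑ i, (a i : ℝ) * (y i / S) = (∑ i, (a i : ℝ) * y i) / S := by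
      rw [Finset.sum_div]
      exact Finset.sum_congr rfl fun i _ => by ring
    rw [hsum, hyorth, zero_div]
  · intro i
    have h1 : 1/8 * ((minAbs a : ℝ) / (snorm a : ℝ)) =
        (1 / (snorm a : ℝ)) / (8 / (minAbs a : ℝ)) := by
      field_simp
    rw [h1]
    exact div_le_div₀ (hypos i).le (hylb i) hSpos hSub
end

section
/- Let a = (a₁,a₂,a₃,a₄) ∈ (ℤ∖{0})⁴ with the aᵢ not all of the same sign, and let δ = (minᵢ|aᵢ|)/(maxᵢ|aᵢ|). Then 𝔍_a(B) ≫ δ³·min{αδ, 1}, where α = log B and the implied constant is independent of a and B. -/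
open Filter MeasureTheory Finset Topology
open scoped ENNReal

/-!
Negating `a` changes nothing, so we may assume that a coordinate `a i0` of least absolute
value `m` is positive, and pick `k` with `a k < 0`. In the coordinates obtained by replacing
`u k` with `⟨a, u⟩` (a linear change of variables of determinant `a k`) take the box
`⟨a, u⟩ ∈ (-h, h)`, `u i0 ∈ (1/8, 1/4)` and `u j ∈ (0, m / (32 |a j|))` otherwise, with
`h = min (‖a‖ / (16 α)) (m / 32)`. On it the term `m u i0` dominates `⟨a, u⟩ - a k u k`, which
forces `0 < u k < 11/32`, so the box lies in the set whose volume defines `τ(a, α)`. Its volume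
is `|a k|⁻¹ · 2h · ∏ (widths) ≥ (2h / M) (δ / 32)³` with `M = maxᵢ |aᵢ|`, and
`α · 2h / M ≥ min (αδ) 1 / 16`.
-/

section ReplaceCoord

variable {ι : Type*} [Fintype ι] [DecidableEq ι]

def replaceCoord (a : ι → ℝ) (k : ι) : (ι → ℝ) →ₗ[ℝ] ι → ℝ :=
  Matrix.toLin' ((1 : Matrix ι ι ℝ).updateRow k a)

theorem replaceCoord_apply (a : ι → ℝ) (k : ι) (u : ι → ℝ) :
    replaceCoord a k u = Function.update u k (a ⬝ᵥ u) := by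
  simp [replaceCoord, Matrix.updateRow_mulVec]

theorem det_replaceCoord (a : ι → ℝ) (k : ι) : LinearMap.det (replaceCoord a k) = a k := by
  rw [replaceCoord, LinearMap.det_toLin', ← Matrix.det_transpose, ← Matrix.updateCol_transpose,
    Matrix.transpose_one, ← Matrix.cramer_apply, Matrix.cramer_one]
  rfl

theorem volume_replaceCoord_preimage_pi_Ioo {a : ι → ℝ} {k : ι} (hk : a k ≠ 0)
    {lo hi : ι → ℝ} (hlohi : lo ≤ hi) :
    volume (replaceCoord a k ⁻¹' Set.univ.pi fun i => Set.Ioo (lo i) (hi i)) =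
      ENNReal.ofReal (|a k|⁻¹ * ∏ i, (hi i - lo i)) := by
  rw [Measure.addHaar_preimage_linearMap _ (by rwa [det_replaceCoord]), volume_pi_pi,
    det_replaceCoord, abs_inv, ENNReal.ofReal_mul (by positivity),
    ENNReal.ofReal_prod_of_nonneg fun i _ => sub_nonneg.2 (hlohi i)]
  simp_rw [Real.volume_Ioo]

end ReplaceCoord

theorem abs_le_sqrt_sum_sq {ι : Type*} [Fintype ι] (u : ι → ℝ) (i : ι) :
    |u i| ≤ Real.sqrt (∑ j, u j ^ 2) :=
  Real.abs_le_sqrt (Finset.single_le_sum (fun j _ => sq_nonneg (u j)) (Finset.mem_univ i))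

theorem sqrt_sum_sq_lt_one {u : Fin 4 → ℝ} (hu : ∀ i, |u i| < 1 / 2) :
    Real.sqrt (∑ i, u i ^ 2) < 1 := by
  rw [Real.sqrt_lt' one_pos, one_pow]
  calc ∑ i, u i ^ 2 < ∑ _i : Fin 4, (1 / 2 : ℝ) ^ 2 :=
        Finset.sum_lt_sum_of_nonempty Finset.univ_nonempty fun i _ =>
          sq_lt_sq' (abs_lt.1 (hu i)).1 (abs_lt.1 (hu i)).2
    _ = 1 := by norm_num

def orthantSlab (a : Fin 4 → ℝ) (ρ : ℝ) : Set (Fin 4 → ℝ) :=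
  {u | Real.sqrt (∑ i, u i ^ 2) < 1 ∧ (∀ i, 0 < u i) ∧
    |∑ i, u i * a i| ≤ Real.sqrt (∑ i, u i ^ 2) * ρ}

theorem orthantSlab_neg (a : Fin 4 → ℝ) (ρ : ℝ) :
    orthantSlab (-a) ρ = orthantSlab a ρ := by
  simp [orthantSlab, Finset.sum_neg_distrib]

theorem volume_orthantSlab_ne_top (a : Fin 4 → ℝ) (ρ : ℝ) :
    volume (orthantSlab a ρ) ≠ ⊤ := by
  have hsub : orthantSlab a ρ ⊆ Set.univ.pi fun _ => Set.Ioo 0 1 := fun u hu =>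
    Set.mem_univ_pi.2 fun i =>
      ⟨hu.2.1 i, (le_abs_self _).trans_lt ((abs_le_sqrt_sum_sq u i).trans_lt hu.1)⟩
  refine ne_top_of_le_ne_top ?_ (measure_mono hsub)
  simp [volume_pi_pi, Real.volume_Ioo]

theorem tauA_eq_volume_orthantSlab (a : Fin 4 → ℤ) (γ : ℝ) :
    tauA a γ = γ * (volume (orthantSlab (fun i => a i) (znorm a / (2 * γ)))).toReal := by
  simp only [tauA, orthantSlab, mul_div_assoc]

section Box

variable {a : Fin 4 → ℝ} {i0 k : Fin 4} {m h : ℝ}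

noncomputable def boxLo (i0 k : Fin 4) (h : ℝ) : Fin 4 → ℝ :=
  fun i => if i = k then -h else if i = i0 then 1 / 8 else 0

noncomputable def boxHi (a : Fin 4 → ℝ) (i0 k : Fin 4) (m h : ℝ) : Fin 4 → ℝ :=
  fun i => if i = k then h else if i = i0 then 1 / 4 else m / (32 * |a i|)

noncomputable def witnessBox (a : Fin 4 → ℝ) (i0 k : Fin 4) (m h : ℝ) : Set (Fin 4 → ℝ) :=
  Set.univ.pi fun i => Set.Ioo (boxLo i0 k h i) (boxHi a i0 k m h i)

theorem boxHi_sub_boxLo_self (a : Fin 4 → ℝ) (i0 k : Fin 4) (m h : ℝ) :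
    boxHi a i0 k m h k - boxLo i0 k h k = 2 * h := by
  simp only [boxHi, boxLo, if_true]
  ring

theorem boxHi_sub_boxLo_ge {M : ℝ} (hm : 0 < m) (hmin : ∀ i, m ≤ |a i|)
    (hmax : ∀ i, |a i| ≤ M) {i : Fin 4} (hik : i ≠ k) :
    m / (32 * M) ≤ boxHi a i0 k m h i - boxLo i0 k h i := by
  have hai : 0 < |a i| := hm.trans_le (hmin i)
  have hmM : m ≤ M := (hmin i).trans (hmax i)
  simp only [boxHi, boxLo, if_neg hik]
  split_ifs
  · rw [div_le_iff₀ (by linarith)]; linarith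
  · rw [sub_zero]; gcongr; exact hmax i

theorem prod_boxHi_sub_boxLo_ge {M : ℝ} (hm : 0 < m) (hh : 0 ≤ h) (hmin : ∀ i, m ≤ |a i|)
    (hmax : ∀ i, |a i| ≤ M) :
    2 * h * (m / (32 * M)) ^ 3 ≤ ∏ i, (boxHi a i0 k m h i - boxLo i0 k h i) := by
  have hM : 0 < M := hm.trans_le ((hmin k).trans (hmax k))
  rw [← Finset.mul_prod_erase _ _ (Finset.mem_univ k), boxHi_sub_boxLo_self]
  gcongr
  calc (m / (32 * M)) ^ 3 = ∏ _i ∈ Finset.univ.erase k, m / (32 * M) := by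
        rw [Finset.prod_const, Finset.card_erase_of_mem (Finset.mem_univ k), Finset.card_univ,
          Fintype.card_fin]
    _ ≤ _ := Finset.prod_le_prod (fun _ _ => by positivity) fun i hi =>
        boxHi_sub_boxLo_ge hm hmin hmax (Finset.ne_of_mem_erase hi)

theorem bounds_of_replaceCoord_mem_box {u : Fin 4 → ℝ} (hik : i0 ≠ k) (hm : 0 < m)
    (hmin : ∀ i, m ≤ |a i|)
    (hu : replaceCoord a k u ∈ witnessBox a i0 k m h) :
    |a ⬝ᵥ u| < h ∧ (1 / 8 < u i0 ∧ u i0 < 1 / 4) ∧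
      ∀ j, j ≠ k → j ≠ i0 → 0 < u j ∧ |a j| * u j < m / 32 := by
  simp only [witnessBox, Set.mem_univ_pi, Set.mem_Ioo, replaceCoord_apply] at hu
  refine ⟨by simpa [boxLo, boxHi, abs_lt] using hu k, by simpa [boxLo, boxHi, hik] using hu i0,
    fun j hjk hji => ?_⟩
  have hj := hu j
  simp only [boxLo, boxHi, Function.update_of_ne hjk, if_neg hjk, if_neg hji] at hj
  have haj : 0 < |a j| := hm.trans_le (hmin j)
  refine ⟨hj.1, ?_⟩
  calc |a j| * u j < |a j| * (m / (32 * |a j|)) := by gcongr; exact hj.2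
    _ = m / 32 := by field_simp

theorem forall_pos_lt_half_of_replaceCoord_mem_box {u : Fin 4 → ℝ} (hik : i0 ≠ k)
    (hm : 0 < m) (hmin : ∀ i, m ≤ |a i|) (hi0 : a i0 = m) (hk : a k < 0) (hhm : h ≤ m / 32)
    (hu : replaceCoord a k u ∈ witnessBox a i0 k m h) :
    ∀ i, 0 < u i ∧ u i < 1 / 2 := by
  obtain ⟨hdot, hui0, hother⟩ := bounds_of_replaceCoord_mem_box hik hm hmin hu
  set O := (Finset.univ.erase k).erase i0
  have hsplit : a ⬝ᵥ u = a k * u k + (m * u i0 + ∑ j ∈ O, a j * u j) := by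
    rw [dotProduct, ← Finset.add_sum_erase _ _ (Finset.mem_univ k),
      ← Finset.add_sum_erase _ _ (Finset.mem_erase.2 ⟨hik, Finset.mem_univ i0⟩), hi0]
  have hrest : |∑ j ∈ O, a j * u j| ≤ m / 16 := by
    have hO : O.card = 2 := by
      rw [Finset.card_erase_of_mem (Finset.mem_erase.2 ⟨hik, Finset.mem_univ i0⟩),
        Finset.card_erase_of_mem (Finset.mem_univ k), Finset.card_univ, Fintype.card_fin]
    calc |∑ j ∈ O, a j * u j| ≤ ∑ j ∈ O, |a j * u j| := Finset.abs_sum_le_sum_abs _ _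
      _ ≤ ∑ _j ∈ O, m / 32 := Finset.sum_le_sum fun j hj => by
          obtain ⟨hji, hjk, -⟩ := Finset.mem_erase.1 hj |>.imp_right Finset.mem_erase.1
          obtain ⟨hpos, hlt⟩ := hother j hjk hji
          rw [abs_mul, abs_of_pos hpos]
          exact hlt.le
      _ = m / 16 := by rw [Finset.sum_const, hO]; ring
  have hamk : m ≤ -a k := by simpa [abs_of_neg hk] using hmin k
  have hkval : m / 32 < -a k * u k ∧ -a k * u k < 11 * m / 32 := by
    have := abs_lt.1 hdot
    have := abs_le.1 hrest
    constructor <;> nlinarith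
  have huk : 0 < u k :=
    pos_of_mul_pos_right ((by positivity : 0 < m / 32).trans hkval.1) (by linarith)
  intro i
  by_cases hik' : i = k
  · subst hik'
    exact ⟨huk, by nlinarith⟩
  by_cases hii0 : i = i0
  · subst hii0
    constructor <;> linarith
  obtain ⟨hpos, hlt⟩ := hother i hik' hii0
  exact ⟨hpos, by nlinarith [hmin i]⟩

theorem preimage_box_subset_orthantSlab {ρ : ℝ} (hik : i0 ≠ k) (hm : 0 < m)
    (hmin : ∀ i, m ≤ |a i|) (hi0 : a i0 = m) (hk : a k < 0) (hhm : h ≤ m / 32)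
    (hhρ : h ≤ ρ / 8) :
    replaceCoord a k ⁻¹' witnessBox a i0 k m h ⊆ orthantSlab a ρ := by
  intro u hu
  obtain ⟨hdot, hui0, -⟩ := bounds_of_replaceCoord_mem_box hik hm hmin hu
  have hbound := forall_pos_lt_half_of_replaceCoord_mem_box hik hm hmin hi0 hk hhm hu
  refine ⟨sqrt_sum_sq_lt_one fun i => abs_lt.2 ⟨by linarith [hbound i], (hbound i).2⟩,
    fun i => (hbound i).1, ?_⟩
  have hnorm : 1 / 8 ≤ Real.sqrt (∑ i, u i ^ 2) :=
    hui0.1.le.trans ((le_abs_self _).trans (abs_le_sqrt_sum_sq u i0))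
  have hρ : 0 ≤ ρ := by linarith [abs_nonneg (a ⬝ᵥ u)]
  calc |∑ i, u i * a i| = |a ⬝ᵥ u| := by simp only [dotProduct, mul_comm]
    _ ≤ 1 / 8 * ρ := by linarith
    _ ≤ Real.sqrt (∑ i, u i ^ 2) * ρ := by gcongr

end Box

theorem volume_orthantSlab_ge {a : Fin 4 → ℝ} {i0 k : Fin 4} {m M ρ : ℝ} (hm : 0 < m)
    (hmin : ∀ i, m ≤ |a i|) (hmax : ∀ i, |a i| ≤ M) (hi0 : |a i0| = m)
    (hsign : a i0 * a k < 0) (hρ : 0 < ρ) :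
    2 * min (ρ / 8) (m / 32) / M * (m / (32 * M)) ^ 3 ≤ (volume (orthantSlab a ρ)).toReal := by
  wlog hpos : 0 < a i0 generalizing a
  · rw [← orthantSlab_neg]
    refine this (by simpa using hmin) (by simpa using hmax) (by simpa using hi0)
      (by simpa using hsign) ?_
    simpa using lt_of_le_of_ne (not_lt.1 hpos) (fun h => by simp [h] at hsign)
  have hik : i0 ≠ k := by
    rintro rfl
    nlinarith
  have hk : a k < 0 := neg_of_mul_neg_right hsign hpos.le
  have hak : 0 < |a k| := hm.trans_le (hmin k)
  have hδ : 0 ≤ m / (32 * M) := div_nonneg hm.le (by linarith [hmax k])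
  set h := min (ρ / 8) (m / 32)
  have hh : 0 < h := lt_min (by positivity) (by positivity)
  have hwidth : boxLo i0 k h ≤ boxHi a i0 k m h := fun i => by
    rcases eq_or_ne i k with rfl | hik'
    · linarith [boxHi_sub_boxLo_self a i0 i m h]
    · linarith [boxHi_sub_boxLo_ge (i0 := i0) (h := h) hm hmin hmax hik']
  calc 2 * h / M * (m / (32 * M)) ^ 3 = M⁻¹ * (2 * h * (m / (32 * M)) ^ 3) := by ring
    _ ≤ |a k|⁻¹ * ∏ i, (boxHi a i0 k m h i - boxLo i0 k h i) := by
        gcongr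
        · exact hmax k
        · exact prod_boxHi_sub_boxLo_ge hm hh.le hmin hmax
    _ = (volume (replaceCoord a k ⁻¹' witnessBox a i0 k m h)).toReal := by
        rw [witnessBox, volume_replaceCoord_preimage_pi_Ioo hk.ne hwidth, ENNReal.toReal_ofReal]
        exact mul_nonneg (by positivity) (Finset.prod_nonneg fun i _ => sub_nonneg.2 (hwidth i))
    _ ≤ (volume (orthantSlab a ρ)).toReal :=
        ENNReal.toReal_mono (volume_orthantSlab_ne_top a ρ) (measure_mono
          (preimage_box_subset_orthantSlab hik hm hmin (by rwa [abs_of_pos hpos] at hi0) hk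
            (min_le_right _ _) (min_le_left _ _)))

theorem min_le_mul_min_div {α m M N : ℝ} (hα : 0 < α) (hm : 0 < m) (hmM : m ≤ M)
    (hMN : M ≤ N) :
    min (α * (m / M)) 1 / 16 ≤ α * (2 * min (N / (2 * α) / 8) (m / 32) / M) := by
  have hM : 0 < M := hm.trans_le hmM
  rcases min_cases (N / (2 * α) / 8) (m / 32) with ⟨hmin, -⟩ | ⟨hmin, -⟩ <;> rw [hmin]
  · calc min (α * (m / M)) 1 / 16 ≤ 1 / 16 := by gcongr; exact min_le_right _ _
      _ ≤ N / (8 * M) := by rw [div_le_div_iff₀ (by norm_num) (by positivity)]; linarith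
      _ = α * (2 * (N / (2 * α) / 8) / M) := by field_simp
  · calc min (α * (m / M)) 1 / 16 ≤ α * (m / M) / 16 := by gcongr; exact min_le_left _ _
      _ = α * (2 * (m / 32) / M) := by ring

section IntegerVectors

variable (a : Fin 4 → ℤ)

theorem minAbs_le_abs (i : Fin 4) : (minAbs a : ℝ) ≤ |(a i : ℝ)| := by
  rw [← Int.cast_abs, ← Nat.cast_natAbs]
  exact_mod_cast Finset.inf'_le _ (Finset.mem_univ i)

theorem abs_le_snorm (i : Fin 4) : |(a i : ℝ)| ≤ snorm a := by
  rw [← Int.cast_abs, ← Nat.cast_natAbs]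
  exact_mod_cast Finset.le_sup (f := fun i => (a i).natAbs) (Finset.mem_univ i)

theorem exists_abs_eq_minAbs : ∃ i, |(a i : ℝ)| = minAbs a := by
  obtain ⟨i, -, hi⟩ := Finset.exists_mem_eq_inf' Finset.univ_nonempty fun i => (a i).natAbs
  exact ⟨i, by rw [minAbs, hi, Nat.cast_natAbs, Int.cast_abs]⟩

theorem snorm_le_znorm : (snorm a : ℝ) ≤ znorm a := by
  obtain ⟨i, -, hi⟩ := Finset.exists_mem_eq_sup Finset.univ Finset.univ_nonempty
    fun i => (a i).natAbs
  rw [snorm, hi, Nat.cast_natAbs, Int.cast_abs]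
  exact abs_le_sqrt_sum_sq (fun i => (a i : ℝ)) i

variable {a}

theorem minAbs_pos (ha : ∀ i, a i ≠ 0) : 0 < minAbs a :=
  (Finset.lt_inf'_iff _).2 fun i _ => Int.natAbs_pos.2 (ha i)

theorem exists_mul_neg_of_not_same_sign (ha : ∀ i, a i ≠ 0)
    (hsign : ¬((∀ i, 0 < a i) ∨ (∀ i, a i < 0))) (i : Fin 4) : ∃ k, a i * a k < 0 := by
  simp only [not_or, not_forall, not_lt] at hsign
  obtain ⟨⟨p, hp⟩, ⟨q, hq⟩⟩ := hsign
  rcases (ha i).lt_or_gt with hi | hi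
  · exact ⟨q, mul_neg_of_neg_of_pos hi (lt_of_le_of_ne hq (ha q).symm)⟩
  · exact ⟨p, mul_neg_of_pos_of_neg hi (lt_of_le_of_ne hp (ha p))⟩

end IntegerVectors

/-- The singular integral is bounded from below:
`𝔍_a(B) ≫ δ³·min{αδ, 1}` with `α = log B`, `δ = minᵢ|aᵢ|/maxᵢ|aᵢ|`, the implied
constant being independent of `a` and `B`. -/
theorem singular_integral_lower_bound :
    ∃ c > (0 : ℝ), ∀ B : ℝ, 3 ≤ B → ∀ a : Fin 4 → ℤ,
      (∀ i, a i ≠ 0) → ¬ ((∀ i, 0 < a i) ∨ (∀ i, a i < 0)) →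
      c * ((minAbs a : ℝ) / (snorm a : ℝ)) ^ 3 *
          min (Real.log B * ((minAbs a : ℝ) / (snorm a : ℝ))) 1 ≤ Jfrak a B := by
  refine ⟨1 / 2 ^ 19, by norm_num, fun B hB a ha hsign => ?_⟩
  have hα : 0 < Real.log B := Real.log_pos (by linarith)
  obtain ⟨i0, hi0⟩ := exists_abs_eq_minAbs a
  obtain ⟨k, hk⟩ := exists_mul_neg_of_not_same_sign ha hsign i0
  have hm : (0 : ℝ) < minAbs a := by exact_mod_cast minAbs_pos ha
  have hmM : (minAbs a : ℝ) ≤ snorm a := (minAbs_le_abs a i0).trans (abs_le_snorm a i0)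
  have hρ : 0 < znorm a / (2 * Real.log B) :=
    div_pos (by linarith [snorm_le_znorm a]) (by positivity)
  have hvol := volume_orthantSlab_ge hm (minAbs_le_abs a) (abs_le_snorm a) hi0
    (by exact_mod_cast hk) hρ
  have hmin := min_le_mul_min_div hα hm hmM (snorm_le_znorm a)
  rw [Jfrak, tauA_eq_volume_orthantSlab]
  set δ := (minAbs a : ℝ) / snorm a
  calc 1 / 2 ^ 19 * δ ^ 3 * min (Real.log B * δ) 1
      = (minAbs a / (32 * snorm a)) ^ 3 * (min (Real.log B * δ) 1 / 16) := by
        field_simp; ring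
    _ ≤ (minAbs a / (32 * snorm a)) ^ 3 * (Real.log B *
          (2 * min (znorm a / (2 * Real.log B) / 8) (minAbs a / 32) / snorm a)) := by gcongr
    _ ≤ _ := by
        rw [mul_left_comm]
        gcongr
        linarith
end
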